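/- The multiresolution max graph filter is permutation equivariant: for coefficients w_0,…,w_K, the map x ↦ ∑_{k=0}^K w_k max(S^k, x) satisfies ∑_{k=0}^K w_k max((Pᵀ S P)^k, Pᵀ x) = Pᵀ ∑_{k=0}^K w_k max(S^k, x) for every permutation matrix P. -/

import Mathlib

open Matrix Finset

/-- `P` is a permutation matrix. -/
def IsPermMatrix {N : ℕ} (P : Matrix (Fin N) (Fin N) ℝ) : Prop :=
  ∃ σ : Equiv.Perm (Fin N), P = σ.permMatrix ℝ

/-- The graph max operator: `[max(M,x)]_i = max { x_j : [M]_{ij} ≠ 0 }`. -/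
noncomputable def gmax {N : ℕ} (S : Matrix (Fin N) (Fin N) ℝ)
    (x : Fin N → ℝ) : Fin N → ℝ :=
  fun i => sSup (x '' {j | S i j ≠ 0})

lemma permMatrix_transpose {N : ℕ} (σ : Equiv.Perm (Fin N)) :
    (σ.permMatrix ℝ)ᵀ = (σ⁻¹).permMatrix ℝ := by
  rw [Equiv.Perm.permMatrix, Equiv.Perm.permMatrix, ← PEquiv.toMatrix_symm,
    ← Equiv.toPEquiv_symm]
  rfl

lemma conj_eq_submatrix {N : ℕ} (σ : Equiv.Perm (Fin N)) (M : Matrix (Fin N) (Fin N) ℝ) :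
    (σ.permMatrix ℝ)ᵀ * M * (σ.permMatrix ℝ) = M.submatrix (⇑σ⁻¹) (⇑σ⁻¹) := by
  rw [permMatrix_transpose, Equiv.Perm.permMatrix, Equiv.Perm.permMatrix,
    PEquiv.toMatrix_toPEquiv_mul, PEquiv.mul_toMatrix_toPEquiv]
  ext i j
  simp [Matrix.submatrix_apply]

lemma permT_mulVec {N : ℕ} (σ : Equiv.Perm (Fin N)) (v : Fin N → ℝ) (i : Fin N) :
    ((σ.permMatrix ℝ)ᵀ.mulVec v) i = v (σ⁻¹ i) := by
  rw [permMatrix_transpose]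
  simp only [Matrix.mulVec, dotProduct, Equiv.Perm.permMatrix,
    PEquiv.toMatrix_apply, Equiv.toPEquiv_apply, Option.mem_def, Option.some.injEq,
    ite_mul, one_mul, zero_mul]
  simp [eq_comm]

lemma permT_mul_perm {N : ℕ} (σ : Equiv.Perm (Fin N)) :
    (σ.permMatrix ℝ)ᵀ * (σ.permMatrix ℝ) = 1 := by
  have := conj_eq_submatrix σ (1 : Matrix (Fin N) (Fin N) ℝ)
  rwa [Matrix.mul_one, Matrix.submatrix_one_equiv (σ⁻¹)] at this

lemma perm_mul_permT {N : ℕ} (σ : Equiv.Perm (Fin N)) :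
    (σ.permMatrix ℝ) * (σ.permMatrix ℝ)ᵀ = 1 :=
  mul_eq_one_comm.mp (permT_mul_perm σ)

lemma permConj_pow {N : ℕ} (σ : Equiv.Perm (Fin N)) (S : Matrix (Fin N) (Fin N) ℝ) (k : ℕ) :
    ((σ.permMatrix ℝ)ᵀ * S * (σ.permMatrix ℝ)) ^ k
      = (σ.permMatrix ℝ)ᵀ * S ^ k * (σ.permMatrix ℝ) := by
  induction k with
  | zero => rw [pow_zero, pow_zero, Matrix.mul_one, permT_mul_perm σ]
  | succ k ih =>
      rw [pow_succ, pow_succ, ih]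
      simp only [Matrix.mul_assoc]
      rw [show (σ.permMatrix ℝ) * ((σ.permMatrix ℝ)ᵀ * (S * σ.permMatrix ℝ))
          = S * σ.permMatrix ℝ from by
        rw [← Matrix.mul_assoc, perm_mul_permT, Matrix.one_mul]]

lemma gmax_conj {N : ℕ} (σ : Equiv.Perm (Fin N)) (M : Matrix (Fin N) (Fin N) ℝ)
    (x : Fin N → ℝ) (i : Fin N) :
    gmax ((σ.permMatrix ℝ)ᵀ * M * (σ.permMatrix ℝ)) ((σ.permMatrix ℝ)ᵀ.mulVec x) i
      = gmax M x (σ⁻¹ i) := by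
  unfold gmax
  congr 1
  rw [conj_eq_submatrix]
  ext y
  constructor
  · rintro ⟨j, hj, rfl⟩
    exact ⟨σ⁻¹ j, hj, (permT_mulVec σ x j).symm⟩
  · rintro ⟨j, hj, rfl⟩
    exact ⟨σ j, by simpa [Matrix.submatrix_apply] using hj, by rw [permT_mulVec]; simp⟩

/-- The multiresolution max graph filter is permutation equivariant. -/
theorem multiresolution_gmax_perm_equivariant {N K : ℕ}
    (S P : Matrix (Fin N) (Fin N) ℝ) (hP : IsPermMatrix P)
    (hS : ∀ k ≤ K, ∀ i, (S ^ k) i i ≠ 0)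
    (w : ℕ → ℝ) (x : Fin N → ℝ) :
    ∑ k ∈ Finset.range (K + 1), w k • gmax ((Pᵀ * S * P) ^ k) (Pᵀ.mulVec x)
      = Pᵀ.mulVec (∑ k ∈ Finset.range (K + 1), w k • gmax (S ^ k) x) := by
  obtain ⟨σ, rfl⟩ := hP
  funext i
  rw [permT_mulVec, Finset.sum_apply, Finset.sum_apply]
  refine Finset.sum_congr rfl fun k _ => ?_
  simp only [Pi.smul_apply, smul_eq_mul]
  rw [permConj_pow, gmax_conj]
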